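/- Let n = 2^m, let W ⊆ F_2^m be a linear subspace and b ∈ F_2^m. Define v = (1/|W^⊥ + b|) · Σ_{c ∈ W^⊥ + b} h_c ∈ ℝ^n, where h_c(a) = (-1)^{⟨a,c⟩}. Then v(a) = (-1)^{⟨a,b⟩} if a ∈ W, and v(a) = 0 if a ∉ W. In particular, v is an integer point of the Hadamard polytope with supp(v) = W. -/

import Mathlib

open scoped BigOperators Classical

noncomputable section

/-- `F m` is the vector space `𝔽₂^m`. -/
abbrev F (m : ℕ) := Fin m → ZMod 2

/-- The standard dot product on `𝔽₂^m`. -/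
def dotF {m : ℕ} (a b : F m) : ZMod 2 := ∑ i, a i * b i

/-- `had c` is the column of the Hadamard matrix indexed by `c`: `had c a = (-1)^⟨a,c⟩`. -/
def had {m : ℕ} (c : F m) : F m → ℝ := fun a => (-1 : ℝ) ^ (dotF a c).val

/-- The Hadamard polytope: the convex hull of the columns of the Hadamard matrix. -/
def Had (m : ℕ) : Set (F m → ℝ) := convexHull ℝ (Set.range (had (m := m)))

/-- A vector has all integer coordinates. -/
def IsIntPoint {ι : Type*} (v : ι → ℝ) : Prop := ∀ a, ∃ z : ℤ, v a = z

lemma dotF_comm {m : ℕ} (a b : F m) : dotF a b = dotF b a := by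
  simp [dotF, mul_comm]

lemma dotF_add_right {m : ℕ} (a b c : F m) :
    dotF a (b + c) = dotF a b + dotF a c := by
  simp [dotF, mul_add, Finset.sum_add_distrib]

lemma dotF_add_left {m : ℕ} (a b c : F m) :
    dotF (a + b) c = dotF a c + dotF b c := by
  simp [dotF, add_mul, Finset.sum_add_distrib]

lemma dotF_zero_right {m : ℕ} (a : F m) : dotF a 0 = 0 := by simp [dotF]

lemma zmod2_cases (x : ZMod 2) : x = 0 ∨ x = 1 := by revert x; decide

lemma pow_val_add (x y : ZMod 2) :
    (-1 : ℝ) ^ (x + y).val = (-1 : ℝ) ^ x.val * (-1 : ℝ) ^ y.val := by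
  rcases zmod2_cases x with rfl | rfl <;> rcases zmod2_cases y with rfl | rfl <;>
    norm_num [show ZMod.val (2 : ZMod 2) = 0 from rfl, show ZMod.val (1 : ZMod 2) = 1 from rfl]

lemma zmod2_add_eq_zero {x y : ZMod 2} (h : x + y = 0) : x = y := by
  revert h; revert x y; decide

/-- The dot product as a bilinear form. -/
def dotB (m : ℕ) : LinearMap.BilinForm (ZMod 2) (F m) :=
  LinearMap.mk₂ (ZMod 2) dotF
    (fun x y z => dotF_add_left x y z)
    (fun r x y => by simp [dotF, Finset.mul_sum, smul_eq_mul, mul_assoc])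
    (fun x y z => dotF_add_right x y z)
    (fun r x y => by simp [dotF, Finset.mul_sum, smul_eq_mul, mul_left_comm])

lemma dotB_apply {m : ℕ} (a b : F m) : dotB m a b = dotF a b := rfl

lemma dotB_nondegenerate (m : ℕ) : (dotB m).Nondegenerate := by
  refine ⟨fun x hx => ?_, fun x hx => ?_⟩
  · funext i
    have := hx (Pi.single i 1)
    simpa [dotB_apply, dotF, Pi.single_apply, mul_ite, Finset.sum_ite_eq'] using this
  · funext i
    have := hx (Pi.single i 1)
    simpa [dotB_apply, dotF, Pi.single_apply, ite_mul, Finset.sum_ite_eq] using this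

lemma dotB_refl (m : ℕ) : (dotB m).IsRefl := by
  intro x y h
  show dotF y x = 0
  rw [dotF_comm]
  exact h

/-- If `a ∉ W`, there is a `d` orthogonal to `W` with `⟨d,a⟩ = 1`. -/
lemma exists_sep {m : ℕ} (W : Submodule (ZMod 2) (F m)) {a : F m} (ha : a ∉ W) :
    ∃ d : F m, (∀ w ∈ W, dotF w d = 0) ∧ dotF d a = 1 := by
  rw [← LinearMap.BilinForm.orthogonal_orthogonal (dotB_nondegenerate m) (dotB_refl m) W] at ha
  rw [LinearMap.BilinForm.mem_orthogonal_iff] at ha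
  push_neg at ha
  obtain ⟨d, hd, hda⟩ := ha
  refine ⟨d, fun w hw => ?_, ?_⟩
  · have := (LinearMap.BilinForm.mem_orthogonal_iff.mp hd) w hw
    exact this
  · rcases zmod2_cases (dotF d a) with h | h
    · exact absurd h hda
    · exact h

theorem coset_average_is_int_point (m : ℕ) (W : Submodule (ZMod 2) (F m)) (b : F m)
    (A : Finset (F m))
    (hA : A = Finset.univ.filter (fun c => ∀ w ∈ W, dotF w (c + b) = 0))
    (v : F m → ℝ)
    (hv : v = fun a => (A.card : ℝ)⁻¹ * ∑ c ∈ A, had c a) :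
    (∀ a ∈ W, v a = (-1 : ℝ) ^ (dotF a b).val) ∧
    (∀ a : F m, a ∉ W → v a = 0) ∧
    v ∈ Had m ∧ IsIntPoint v ∧ (∀ a : F m, v a ≠ 0 ↔ a ∈ W) := by
  have hbb : b + b = 0 := by
    funext i; exact CharTwo.add_self_eq_zero (b i)
  have hbA : b ∈ A := by
    rw [hA, Finset.mem_filter]
    refine ⟨Finset.mem_univ _, fun w _ => ?_⟩
    rw [hbb, dotF_zero_right]
  have hcard : (A.card : ℝ) ≠ 0 := by
    have : 0 < A.card := Finset.card_pos.mpr ⟨b, hbA⟩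
    exact_mod_cast this.ne'
  -- part 1 : a ∈ W
  have h1 : ∀ a ∈ W, v a = (-1 : ℝ) ^ (dotF a b).val := by
    intro a haW
    have hsum : ∀ c ∈ A, had c a = (-1 : ℝ) ^ (dotF a b).val := by
      intro c hc
      rw [hA, Finset.mem_filter] at hc
      have h0 : dotF a (c + b) = 0 := hc.2 a haW
      rw [dotF_add_right] at h0
      have : dotF a c = dotF a b := zmod2_add_eq_zero h0
      simp [had, this]
    rw [hv]
    simp only
    rw [Finset.sum_congr rfl hsum, Finset.sum_const, nsmul_eq_mul, ← mul_assoc,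
      inv_mul_cancel₀ hcard, one_mul]
  -- part 2 : a ∉ W
  have h2 : ∀ a : F m, a ∉ W → v a = 0 := by
    intro a haW
    obtain ⟨d, hdW, hda⟩ := exists_sep W haW
    have hd0 : d ≠ 0 := by
      intro h
      rw [h, dotF_comm, dotF_zero_right] at hda
      exact one_ne_zero hda.symm
    have hsum : ∑ c ∈ A, had c a = 0 := by
      refine Finset.sum_involution (fun c _ => c + d) ?_ ?_ ?_ ?_
      · intro c _
        have : dotF a (c + d) = dotF a c + dotF a d := dotF_add_right a c d
        have had' : dotF a d = 1 := by rw [dotF_comm]; exact hda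
        simp [had, this, had', pow_val_add]
        ring_nf
        simp [ZMod.val_one]
  -- (-1)^(x).val + (-1)^x.val * (-1)^1 = 0
      · intro c _ _
        intro h
        exact hd0 (by simpa using h)
      · intro c hc
        show c + d ∈ A
        rw [hA, Finset.mem_filter] at hc ⊢
        refine ⟨Finset.mem_univ _, fun w hw => ?_⟩
        have : c + d + b = (c + b) + d := by ring
        rw [this, dotF_add_right, hc.2 w hw, hdW w hw, add_zero]
      · intro c _
        show c + d + d = c
        have : d + d = 0 := by funext i; exact CharTwo.add_self_eq_zero (d i)
        rw [add_assoc, this, add_zero]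
    rw [hv]; simp only
    rw [hsum, mul_zero]
  -- convex hull membership
  have h3 : v ∈ Had m := by
    have hv' : v = ∑ c ∈ A, (A.card : ℝ)⁻¹ • had c := by
      funext a
      rw [hv]
      simp [Finset.mul_sum]
    rw [hv']
    refine (convex_convexHull ℝ _).sum_mem (fun c _ => by positivity) ?_
      (fun c _ => subset_convexHull ℝ _ ⟨c, rfl⟩)
    rw [Finset.sum_const, nsmul_eq_mul, mul_inv_cancel₀ hcard]
  -- integer point
  have h4 : IsIntPoint v := by
    intro a
    by_cases haW : a ∈ W
    · exact ⟨(-1 : ℤ) ^ (dotF a b).val, by rw [h1 a haW]; push_cast; ring⟩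
    · exact ⟨0, by rw [h2 a haW]; norm_num⟩
  refine ⟨h1, h2, h3, h4, fun a => ⟨fun hne => ?_, fun haW => ?_⟩⟩
  · by_contra haW
    exact hne (h2 a haW)
  · rw [h1 a haW]
    exact pow_ne_zero _ (by norm_num)
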